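/- arXiv:2205.14754 — 2 statements merged into one kernel-verified Lean document; each statement's English description precedes it below -/
import Mathlib

section
/- Let G₁ and G₂ be finite connected simple graphs without isolated vertices, with edges numbered so that their matching arrangements MA(G₁) and MA(G₂) consist of hyperplanes with identical sets of defining equations. Then the line graphs of G₁ and G₂ are isomorphic. -/
open Finset

/-- The alternating-sign vector `e_{i₁} - e_{i₂} + e_{i₃} - ⋯` of a list of indices. -/
def altVec {n : ℕ} : List (Fin n) → (Fin n → ℝ)
  | [] => 0
  | i :: l => Pi.single i 1 - altVec l

/-- The hyperplane (through the origin) with normal vector `v`, i.e. the kernel of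
`x ↦ ∑ i, v i * x i`. -/
noncomputable def hyp {n : ℕ} (v : Fin n → ℝ) : Submodule ℝ (Fin n → ℝ) :=
  LinearMap.ker (∑ i, v i • (LinearMap.proj i : (Fin n → ℝ) →ₗ[ℝ] ℝ))

/-- The list of edge numbers along a walk, for a numbering `N` of the edges. -/
def edgeIdx {V : Type*} {n : ℕ} {G : SimpleGraph V} (N : G.edgeSet ≃ Fin n)
    {a b : V} (p : G.Walk a b) : List (Fin n) :=
  p.edges.pmap (fun e he => N ⟨e, he⟩) (fun _ he => p.edges_subset_edgeSet he)

/-- The matching arrangement `MA(G, N)` of a graph `G` with edge numbering `N`: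
the set of hyperplanes `x_{r₁} - x_{r₂} + x_{r₃} - ⋯ = 0`, one for every simple path
and every even simple cycle `(r₁, …, r_m)` of `G`. -/
noncomputable def MASet {V : Type*} {n : ℕ} (G : SimpleGraph V) (N : G.edgeSet ≃ Fin n) :
    Set (Submodule ℝ (Fin n → ℝ)) :=
  {H | (∃ (a b : V) (p : G.Walk a b), 0 < p.length ∧ p.IsPath ∧
          H = hyp (altVec (edgeIdx N p))) ∨
       (∃ (a : V) (p : G.Walk a a), p.IsCycle ∧ Even p.length ∧
          H = hyp (altVec (edgeIdx N p)))}

/-- The value at `t` of the characteristic polynomial of a (central) arrangement, given by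
Whitney's formula `χ_A(t) = ∑_{S ⊆ A} (-1)^{|S|} t^{dim ∩ S}`. -/
noncomputable def charPolyEval {M : Type*} [AddCommGroup M] [Module ℝ M]
    (A : Finset (Submodule ℝ M)) (t : ℝ) : ℝ :=
  ∑ S ∈ A.powerset, (-1 : ℝ) ^ S.card * t ^ (Module.finrank ℝ ↥(S.inf id))

lemma altVec_not_mem {n : ℕ} {l : List (Fin n)} {k : Fin n} (h : k ∉ l) : altVec l k = 0 := by
  induction l with
  | nil => rfl
  | cons i l ih =>
    simp only [List.mem_cons, not_or] at h
    simp [altVec, Pi.single_eq_of_ne h.1, ih h.2]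

lemma altVec_mem {n : ℕ} {l : List (Fin n)} (hnd : l.Nodup) {k : Fin n} (h : k ∈ l) :
    altVec l k ≠ 0 := by
  induction l with
  | nil => simp at h
  | cons i l ih =>
    rcases List.mem_cons.mp h with rfl | h
    · simp [altVec, altVec_not_mem (List.nodup_cons.mp hnd).1]
    · have : k ≠ i := fun e => (List.nodup_cons.mp hnd).1 (e ▸ h)
      simpa [altVec, Pi.single_eq_of_ne this] using ih (List.nodup_cons.mp hnd).2 h

lemma hyp_apply {n : ℕ} (v x : Fin n → ℝ) :
    (∑ i, v i • (LinearMap.proj i : (Fin n → ℝ) →ₗ[ℝ] ℝ)) x = ∑ i, v i * x i := by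
  simp [LinearMap.sum_apply, LinearMap.smul_apply]

lemma fun_apply_single {n : ℕ} (v : Fin n → ℝ) (k : Fin n) :
    (∑ i, v i • (LinearMap.proj i : (Fin n → ℝ) →ₗ[ℝ] ℝ)) (Pi.single k 1) = v k := by
  rw [hyp_apply]
  simp [Pi.single_apply, mul_ite]

lemma hyp_support_subset {n : ℕ} {v w : Fin n → ℝ} (hw : w ≠ 0) (h : hyp v = hyp w)
    {k : Fin n} (hk : v k ≠ 0) : w k ≠ 0 := by
  set f := ∑ i, v i • (LinearMap.proj i : (Fin n → ℝ) →ₗ[ℝ] ℝ) with hf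
  set g := ∑ i, w i • (LinearMap.proj i : (Fin n → ℝ) →ₗ[ℝ] ℝ) with hg
  obtain ⟨k₀, hk₀⟩ : ∃ k₀, w k₀ ≠ 0 := by
    by_contra hc; push_neg at hc; exact hw (funext hc)
  have key : ∀ y, f y = (f (Pi.single k₀ 1) / g (Pi.single k₀ 1)) * g y := by
    intro y
    have hgx : g (Pi.single k₀ 1) ≠ 0 := by rwa [hg, fun_apply_single]
    have hmem : y - (g y / g (Pi.single k₀ 1)) • (Pi.single k₀ 1 : Fin n → ℝ) ∈ LinearMap.ker g := by
      rw [LinearMap.mem_ker, map_sub, map_smul, smul_eq_mul]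
      field_simp; ring
    have hker : LinearMap.ker f = LinearMap.ker g := h
    rw [← hker] at hmem
    have := LinearMap.mem_ker.mp hmem
    rw [map_sub, map_smul, smul_eq_mul, sub_eq_zero] at this
    rw [this]; field_simp
  have hv := key (Pi.single k 1)
  rw [fun_apply_single, fun_apply_single, fun_apply_single, fun_apply_single] at hv
  intro hwk
  rw [hwk, mul_zero] at hv
  exact hk hv

section EdgeIdx
variable {V : Type*} {n : ℕ} {G : SimpleGraph V} (N : G.edgeSet ≃ Fin n) {a b : V}

lemma edgeIdx_length (p : G.Walk a b) : (edgeIdx N p).length = p.length := by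
  simp [edgeIdx, List.length_pmap]

lemma edgeIdx_nodup {p : G.Walk a b} (h : p.edges.Nodup) : (edgeIdx N p).Nodup :=
  h.pmap (fun a _ b _ hab => by simpa using congrArg (fun x => (N.symm x : Sym2 V)) hab)

lemma mem_edgeIdx {p : G.Walk a b} {k : Fin n} :
    k ∈ edgeIdx N p ↔ ((N.symm k : G.edgeSet) : Sym2 V) ∈ p.edges := by
  simp only [edgeIdx, List.mem_pmap]
  constructor
  · rintro ⟨e, he, rfl⟩
    simpa using he
  · intro hk
    exact ⟨_, hk, by simp⟩

end EdgeIdx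

lemma sub_single_apply {n : ℕ} {i j : Fin n} (hij : i ≠ j) (k : Fin n) :
    (Pi.single i 1 - Pi.single j 1 : Fin n → ℝ) k ≠ 0 ↔ k = i ∨ k = j := by
  rcases eq_or_ne k i with rfl | hki
  · simp [Pi.single_eq_of_ne (Ne.symm hij), hij.symm]
  · rcases eq_or_ne k j with rfl | hkj
    · simp [Pi.single_eq_of_ne hki]
    · simp [Pi.single_eq_of_ne hki, Pi.single_eq_of_ne hkj, hki, hkj]

lemma key {V : Type*} {n : ℕ} (G : SimpleGraph V) (N : G.edgeSet ≃ Fin n)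
    {i j : Fin n} (hij : i ≠ j) :
    hyp (Pi.single i 1 - Pi.single j 1) ∈ MASet G N ↔
      G.lineGraph.Adj (N.symm i) (N.symm j) := by
  have hwne : (Pi.single i 1 - Pi.single j 1 : Fin n → ℝ) ≠ 0 := by
    intro h0
    have := (sub_single_apply hij i).mpr (Or.inl rfl)
    rw [h0] at this; exact this rfl
  constructor
  · -- forward
    have main : ∀ (a b : V) (p : G.Walk a b), 0 < p.length → p.edges.Nodup →
        hyp (Pi.single i 1 - Pi.single j 1) = hyp (altVec (edgeIdx N p)) →
        p.length = 2 ∧ i ∈ edgeIdx N p ∧ j ∈ edgeIdx N p := by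
      intro a b p hpos hnd hH
      set l := edgeIdx N p with hl
      have hlnd : l.Nodup := edgeIdx_nodup N hnd
      have hlen : l.length = p.length := edgeIdx_length N p
      have hlne : l ≠ [] := by
        intro h0; rw [h0] at hlen; simp at hlen; omega
      have havne : altVec l ≠ 0 := by
        intro h0
        obtain ⟨k, hk⟩ := List.exists_mem_of_ne_nil l hlne
        exact altVec_mem hlnd hk (by rw [h0]; rfl)
      have hsupp : ∀ k, k ∈ l ↔ (k = i ∨ k = j) := by
        intro k
        constructor
        · intro hk
          exact (sub_single_apply hij k).mp
            (hyp_support_subset hwne hH.symm (altVec_mem hlnd hk))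
        · intro hk
          by_contra hkl
          exact hyp_support_subset havne hH ((sub_single_apply hij k).mpr hk)
            (altVec_not_mem hkl)
      have hsub : l ⊆ [i, j] := by
        intro k hk
        rcases (hsupp k).mp hk with rfl | rfl <;> simp
      have hle : l.length ≤ 2 := by
        simpa using (hlnd.subperm hsub).length_le
      have hi : i ∈ l := (hsupp i).mpr (Or.inl rfl)
      have hj : j ∈ l := (hsupp j).mpr (Or.inr rfl)
      have h2 : l.length = 2 := by
        rcases l with _ | ⟨x, _ | ⟨y, t⟩⟩
        · simp at hi
        · simp at hi hj; exact absurd (hi.trans hj.symm) hij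
        · simp only [List.length_cons] at hle ⊢; omega
      exact ⟨by omega, hi, hj⟩
    rintro (⟨a, b, p, hpos, hpath, hH⟩ | ⟨a, p, hcyc, heven, hH⟩)
    · obtain ⟨h2, hi, hj⟩ := main a b p hpos hpath.isTrail.edges_nodup hH
      clear hH hpos
      cases p with
      | nil => simp at h2
      | cons hadj q =>
        cases q with
        | nil => simp at h2
        | cons hadj' q' =>
          cases q' with
          | nil =>
            rename_i x
            simp only [edgeIdx, SimpleGraph.Walk.edges_cons, SimpleGraph.Walk.edges_nil,
              List.pmap, List.mem_cons, List.not_mem_nil, or_false] at hi hj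
            have hadj2 : G.lineGraph.Adj ⟨s(a, x), hadj⟩ ⟨s(x, b), hadj'⟩ := by
              refine SimpleGraph.lineGraph_adj_iff_exists.mpr ⟨?_, x, by simp, by simp⟩
              intro he
              have hNe := congrArg N he
              rcases hi with rfl | rfl <;> rcases hj with rfl | rfl <;>
                first
                  | exact hij rfl
                  | exact hij hNe
                  | exact hij hNe.symm
            rcases hi with rfl | rfl <;> rcases hj with rfl | rfl <;>
              simp only [Equiv.symm_apply_apply] <;>
              first
                | exact hadj2
                | exact hadj2.symm
                | simp at hij
          | cons h'' q'' => simp [SimpleGraph.Walk.length_cons] at h2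
    · have h3 := hcyc.three_le_length
      obtain ⟨h2, _, _⟩ := main a a p (by omega) hcyc.edges_nodup hH
      omega
  · intro hadj
    rw [SimpleGraph.lineGraph_adj_iff_exists] at hadj
    obtain ⟨hne, x, hx1, hx2⟩ := hadj
    obtain ⟨a, ha⟩ := Sym2.mem_iff_exists.mp hx1
    obtain ⟨c, hc⟩ := Sym2.mem_iff_exists.mp hx2
    have hax : G.Adj x a := (SimpleGraph.mem_edgeSet G).mp (ha ▸ (N.symm i).2)
    have hxc : G.Adj x c := (SimpleGraph.mem_edgeSet G).mp (hc ▸ (N.symm j).2)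
    have hac : a ≠ c := by
      rintro rfl
      exact hne (Subtype.ext (ha.trans hc.symm))
    have hi' : N ⟨s(a, x), hax.symm⟩ = i := by
      have : (⟨s(a, x), hax.symm⟩ : G.edgeSet) = N.symm i :=
        Subtype.ext (by rw [ha]; exact Sym2.eq_swap)
      rw [this, Equiv.apply_symm_apply]
    have hj' : N ⟨s(x, c), hxc⟩ = j := by
      have : (⟨s(x, c), hxc⟩ : G.edgeSet) = N.symm j := Subtype.ext (by rw [hc])
      rw [this, Equiv.apply_symm_apply]
    refine Or.inl ⟨a, c, SimpleGraph.Walk.cons hax.symm (SimpleGraph.Walk.cons hxc SimpleGraph.Walk.nil), by simp, ?_, ?_⟩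
    · rw [SimpleGraph.Walk.isPath_def]
      simp [hax.ne', hxc.ne, hac]
    · have hidx : edgeIdx N (SimpleGraph.Walk.cons hax.symm
          (SimpleGraph.Walk.cons hxc SimpleGraph.Walk.nil)) = [i, j] := by
        simp only [edgeIdx, SimpleGraph.Walk.edges_cons, SimpleGraph.Walk.edges_nil, List.pmap]
        rw [List.cons.injEq, List.cons.injEq]
        exact ⟨hi', hj', rfl⟩
      rw [hidx]
      simp [altVec]


/-- If two finite connected simple graphs without isolated vertices have edge numberings
for which their matching arrangements consist of identical sets of hyperplanes, then
their line graphs are isomorphic. -/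
theorem lineGraph_iso_of_MA_identical {V₁ V₂ : Type*} [Fintype V₁] [Fintype V₂]
    [DecidableEq V₁] [DecidableEq V₂] {n : ℕ}
    (G₁ : SimpleGraph V₁) (G₂ : SimpleGraph V₂)
    (hc₁ : G₁.Connected) (hc₂ : G₂.Connected)
    (hni₁ : ∀ v : V₁, ∃ w, G₁.Adj v w) (hni₂ : ∀ v : V₂, ∃ w, G₂.Adj v w)
    (N₁ : G₁.edgeSet ≃ Fin n) (N₂ : G₂.edgeSet ≃ Fin n)
    (h : MASet G₁ N₁ = MASet G₂ N₂) :
    Nonempty (G₁.lineGraph ≃g G₂.lineGraph) := by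
  refine ⟨{ toEquiv := N₁.trans N₂.symm, map_rel_iff' := ?_ }⟩
  intro e f
  simp only [Equiv.trans_apply]
  rcases eq_or_ne e f with rfl | hef
  · simp
  · have hij : N₁ e ≠ N₁ f := fun hc => hef (N₁.injective hc)
    have h1 := key G₁ N₁ hij
    have h2 := key G₂ N₂ hij
    simp only [Equiv.symm_apply_apply] at h1
    rw [← h2, ← h]
    exact h1
end

section
/- Let T be a tree, u a vertex, and for each vertex w ≠ u let c_w ∈ ℝⁿ be the alternating-sign vector of the unique path from u to w (starting sign + at the edge incident to u). Then for any two distinct vertices w₁, w₂ ≠ u, the vector c_{w₁} − c_{w₂} is, up to sign, the alternating-sign vector of the unique simple path from w₁ to w₂. -/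
open Finset

/-!
Removing the common initial edge `e` of two paths from `u` flips the sign of
`c_{w₁} - c_{w₂}`, since `altVec (e :: l) = e - altVec l`. Once the paths diverge, the
reversed first path followed by the second is a path (here acyclicity enters), hence is
the path from `w₁` to `w₂`, and its alternating vector is `±(c_{w₁} - c_{w₂})` because
reversing a list of length `m` multiplies `altVec` by `(-1)^(m+1)`.
-/

open SimpleGraph

theorem altVec_append {n : ℕ} (l₁ l₂ : List (Fin n)) :
    altVec (l₁ ++ l₂) = altVec l₁ + (-1 : ℝ) ^ l₁.length • altVec l₂ := by
  induction l₁ with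
  | nil => simp [altVec]
  | cons i l ih =>
    simp only [List.cons_append, altVec, ih, List.length_cons, pow_succ]
    module

theorem altVec_reverse {n : ℕ} (l : List (Fin n)) :
    altVec l.reverse = (-1 : ℝ) ^ (l.length + 1) • altVec l := by
  induction l with
  | nil => simp [altVec]
  | cons i l ih =>
    simp only [List.reverse_cons, altVec_append, ih, List.length_reverse, altVec,
      List.length_cons, pow_succ]
    module

section edgeIdx

variable {V : Type*} {n : ℕ} {G : SimpleGraph V} (N : G.edgeSet ≃ Fin n)

theorem edgeIdx_cons {u v w : V} (h : G.Adj u v) (p : G.Walk v w) :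
    edgeIdx N (Walk.cons h p) = N ⟨s(u, v), h⟩ :: edgeIdx N p := rfl

theorem edgeIdx_append {u v w : V} (p : G.Walk u v) (q : G.Walk v w) :
    edgeIdx N (p.append q) = edgeIdx N p ++ edgeIdx N q := by
  induction p with
  | nil => rfl
  | cons h p ih => rw [Walk.cons_append, edgeIdx_cons, edgeIdx_cons, ih, List.cons_append]

theorem edgeIdx_reverse {u v : V} (p : G.Walk u v) :
    edgeIdx N p.reverse = (edgeIdx N p).reverse := by
  induction p with
  | nil => rfl
  | cons h p ih =>
    rw [Walk.reverse_cons, edgeIdx_append, ih, edgeIdx_cons]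
    simp [Sym2.eq_swap, edgeIdx, Walk.edges]

theorem length_edgeIdx {u v : V} (p : G.Walk u v) : (edgeIdx N p).length = p.length := by
  simp [edgeIdx]

theorem altVec_edgeIdx_reverse_append {u w₁ w₂ : V} (p₁ : G.Walk u w₁) (p₂ : G.Walk u w₂) :
    altVec (edgeIdx N (p₁.reverse.append p₂)) =
      (-1 : ℝ) ^ (p₁.length + 1) • (altVec (edgeIdx N p₁) - altVec (edgeIdx N p₂)) := by
  rw [edgeIdx_append, edgeIdx_reverse, altVec_append, altVec_reverse, List.length_reverse,
    length_edgeIdx, pow_succ]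
  module

end edgeIdx

namespace SimpleGraph.IsAcyclic

variable {V : Type*} {G : SimpleGraph V}

theorem eq_of_isPath (hG : G.IsAcyclic) {v w : V} {p q : G.Walk v w}
    (hp : p.IsPath) (hq : q.IsPath) : p = q :=
  congrArg Subtype.val ((hG.subsingleton_path v w).elim ⟨p, hp⟩ ⟨q, hq⟩)

theorem isPath_reverse_append_cons (hG : G.IsAcyclic) {u v₁ v₂ w₁ w₂ : V}
    (h₁ : G.Adj u v₁) (h₂ : G.Adj u v₂) {t₁ : G.Walk v₁ w₁} {t₂ : G.Walk v₂ w₂}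
    (hp₁ : (Walk.cons h₁ t₁).IsPath) (hp₂ : (Walk.cons h₂ t₂).IsPath) (hv : v₁ ≠ v₂) :
    ((Walk.cons h₁ t₁).reverse.append (Walk.cons h₂ t₂)).IsPath := by
  classical
  -- a common vertex `x` would give two paths `u → x` through different neighbours of `u`
  have hdisj : t₁.support.Disjoint t₂.support := by
    intro x hx₁ hx₂
    have hxu : u ≠ x := by rintro rfl; exact ((Walk.cons_isPath_iff _ _).1 hp₁).2 hx₁
    have hprefix := hG.eq_of_isPath (hp₁.takeUntil (List.mem_of_mem_tail hx₁))
      (hp₂.takeUntil (List.mem_of_mem_tail hx₂))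
    rw [Walk.takeUntil_cons hx₁ hxu, Walk.takeUntil_cons hx₂ hxu] at hprefix
    exact hv (by simpa using congrArg Walk.snd hprefix)
  rw [Walk.cons_isPath_iff] at hp₁ hp₂
  simp only [Walk.isPath_def, Walk.support_append, Walk.support_reverse, Walk.support_cons,
    List.tail_cons, List.reverse_cons, List.nodup_append, List.nodup_reverse, List.nodup_cons,
    List.mem_reverse]
  grind [Walk.IsPath.support_nodup, List.Disjoint]

variable {n : ℕ} (N : G.edgeSet ≃ Fin n)

theorem exists_altVec_sub_eq_of_isPath_reverse_append (hG : G.IsAcyclic) {u w₁ w₂ : V}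
    {p₁ : G.Walk u w₁} {p₂ : G.Walk u w₂} {q : G.Walk w₁ w₂}
    (hglued : (p₁.reverse.append p₂).IsPath) (hq : q.IsPath) :
    ∃ k : ℕ, altVec (edgeIdx N p₁) - altVec (edgeIdx N p₂) =
      (-1 : ℝ) ^ k • altVec (edgeIdx N q) := by
  refine ⟨p₁.length + 1, ?_⟩
  rw [hG.eq_of_isPath hq hglued, altVec_edgeIdx_reverse_append, smul_smul, ← mul_pow,
    neg_one_mul, neg_neg, one_pow, one_smul]

theorem exists_altVec_sub_eq (hG : G.IsAcyclic) {u w₁ w₂ : V}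
    {p₁ : G.Walk u w₁} {p₂ : G.Walk u w₂} {q : G.Walk w₁ w₂}
    (hp₁ : p₁.IsPath) (hp₂ : p₂.IsPath) (hq : q.IsPath) :
    ∃ k : ℕ, altVec (edgeIdx N p₁) - altVec (edgeIdx N p₂) =
      (-1 : ℝ) ^ k • altVec (edgeIdx N q) := by
  induction p₁ with
  | nil => exact hG.exists_altVec_sub_eq_of_isPath_reverse_append N hp₂ hq
  | @cons _ v₁ _ h₁ t₁ ih =>
    cases p₂ with
    | nil =>
      exact hG.exists_altVec_sub_eq_of_isPath_reverse_append N (by simpa using hp₁.reverse) hq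
    | @cons _ v₂ _ h₂ t₂ =>
      obtain rfl | hv := eq_or_ne v₁ v₂
      · obtain ⟨k, hk⟩ := ih hp₁.of_cons hp₂.of_cons hq
        refine ⟨k + 1, ?_⟩
        rw [edgeIdx_cons, edgeIdx_cons, altVec, altVec, pow_succ, mul_neg_one, neg_smul, ← hk]
        abel
      · exact hG.exists_altVec_sub_eq_of_isPath_reverse_append N
          (hG.isPath_reverse_append_cons h₁ h₂ hp₁ hp₂ hv) hq

end SimpleGraph.IsAcyclic

theorem pathVec_sub_pathVec_general {V : Type*} {n : ℕ}
    (T : SimpleGraph V) (hT : T.IsTree) (N : T.edgeSet ≃ Fin n)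
    (u w₁ w₂ : V)
    (p₁ : T.Walk u w₁) (p₂ : T.Walk u w₂) (q : T.Walk w₁ w₂)
    (hp₁ : p₁.IsPath) (hp₂ : p₂.IsPath) (hq : q.IsPath) :
    altVec (edgeIdx N p₁) - altVec (edgeIdx N p₂) = altVec (edgeIdx N q) ∨
    altVec (edgeIdx N p₁) - altVec (edgeIdx N p₂) = -altVec (edgeIdx N q) := by
  obtain ⟨k, hk⟩ := hT.isAcyclic.exists_altVec_sub_eq N hp₁ hp₂ hq
  rcases neg_one_pow_eq_or ℝ k with h | h <;> simp [hk, h]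

/-- Let `T` be a tree, `u` a vertex, and for `w ≠ u` let `c_w` be the alternating-sign
vector of the unique simple path from `u` to `w` (starting with sign `+` at the edge
incident to `u`). Then for distinct vertices `w₁, w₂ ≠ u`, the vector `c_{w₁} - c_{w₂}` is,
up to sign, the alternating-sign vector of the unique simple path from `w₁` to `w₂`. -/
theorem pathVec_sub_pathVec {V : Type*} [Fintype V] [DecidableEq V] {n : ℕ}
    (T : SimpleGraph V) (hT : T.IsTree) (N : T.edgeSet ≃ Fin n)
    (u w₁ w₂ : V) (hw₁ : w₁ ≠ u) (hw₂ : w₂ ≠ u) (hne : w₁ ≠ w₂)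
    (p₁ : T.Walk u w₁) (p₂ : T.Walk u w₂) (q : T.Walk w₁ w₂)
    (hp₁ : p₁.IsPath) (hp₂ : p₂.IsPath) (hq : q.IsPath) :
    altVec (edgeIdx N p₁) - altVec (edgeIdx N p₂) = altVec (edgeIdx N q) ∨
    altVec (edgeIdx N p₁) - altVec (edgeIdx N p₂) = -altVec (edgeIdx N q) :=
  pathVec_sub_pathVec_general T hT N u w₁ w₂ p₁ p₂ q hp₁ hp₂ hq
end
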